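/- Pointwise admissibility of e-values (sufficiency): if (𝔢_t)_{t∈ℕ₀} is a nonnegative martingale under Q with E_Q[𝔢_0] = 1, then (𝔢_t) is an admissible e-value for Q: it satisfies E_Q[𝔢_τ] ≤ 1 for all stopping times τ, and any other process (𝔢'_t) with E_Q[𝔢'_τ] ≤ 1 for all stopping times τ and 𝔢'_t ≥ 𝔢_t Q-a.s. for all t must satisfy 𝔢'_t = 𝔢_t Q-a.s. for all t. -/

import Mathlib

/-!
For a bounded stopping time, optional stopping gives `E[𝔢_τ] = E[𝔢_0] = 1`. A nonnegative
martingale is bounded in `L¹`, so it converges a.s. and `𝔢_∞ = limsup 𝔢_t` is its limit; hence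
`𝔢_τ = lim 𝔢_{τ ∧ n}` a.s. and Fatou's lemma gives `E[𝔢_τ] ≤ 1` for every stopping time.
For maximality, the constant stopping time `t` gives `E[𝔢'_t] ≤ 1 = E[𝔢_t]`, which together with
`𝔢'_t ≥ 𝔢_t` forces `𝔢'_t = 𝔢_t` a.s.
-/

open MeasureTheory Filter
open scoped ENNReal Topology ProbabilityTheory

/-- Value of a process `f` at a possibly infinite stopping time `τ`, with value at `∞`
given by `limsup` (so `𝔢_∞ := limsup 𝔢_t`). -/
noncomputable def stopVal {Ω : Type*} (f : ℕ → Ω → ℝ) (τ : Ω → ℕ∞) (ω : Ω) : ℝ :=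
  if h : τ ω = ⊤ then Filter.limsup (fun t => f t ω) Filter.atTop
  else f ((τ ω).untop h) ω

/-- A possibly infinite stopping time with respect to `ℱ`. -/
def IsENatStoppingTime {Ω : Type*} {m0 : MeasurableSpace Ω} (ℱ : Filtration ℕ m0)
    (τ : Ω → ℕ∞) : Prop :=
  ∀ t : ℕ, MeasurableSet[ℱ t] {ω | τ ω ≤ (t : ℕ∞)}

theorem isENatStoppingTime_iff_isStoppingTime {Ω : Type*} {m0 : MeasurableSpace Ω}
    {ℱ : Filtration ℕ m0} {τ : Ω → ℕ∞} : IsENatStoppingTime ℱ τ ↔ IsStoppingTime ℱ τ :=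
  Iff.rfl

theorem stopVal_eq_stoppedValue {Ω : Type*} (u : ℕ → Ω → ℝ) {τ : Ω → ℕ∞} {ω : Ω}
    (hτ : τ ω ≠ ⊤) : stopVal u τ ω = stoppedValue u τ ω := by
  simp [stopVal, stoppedValue, hτ, WithTop.untopA_eq_untop hτ]

theorem stopVal_const {Ω : Type*} (u : ℕ → Ω → ℝ) (t : ℕ) :
    stopVal u (fun _ => (t : ℕ∞)) = u t := by
  funext ω
  rw [stopVal_eq_stoppedValue u (ENat.natCast_ne_top t)]
  simp [stoppedValue]

theorem tendsto_stoppedValue_min_stopVal {Ω : Type*} {u : ℕ → Ω → ℝ} {τ : Ω → ℕ∞} {ω : Ω}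
    {c : ℝ} (hu : Tendsto (fun n => u n ω) atTop (𝓝 c)) :
    Tendsto (fun n : ℕ => stoppedValue u (fun ω => (min (τ ω) n : ℕ∞)) ω) atTop
      (𝓝 (stopVal u τ ω)) := by
  rcases eq_or_ne (τ ω) ⊤ with hτ | hτ
  · have hstop (n : ℕ) : stoppedValue u (fun ω => (min (τ ω) n : ℕ∞)) ω = u n ω := by
      simp [stoppedValue, hτ]
    simpa [hstop, stopVal, hτ, hu.limsup_eq] using hu
  · obtain ⟨k, hk⟩ := ENat.ne_top_iff_exists.1 hτ
    rw [stopVal_eq_stoppedValue u hτ]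
    refine tendsto_const_nhds.congr' ?_
    filter_upwards [eventually_ge_atTop k] with n hn
    simp [stoppedValue, ← hk, hn]

theorem ae_eq_of_ae_le_of_lintegral_ofReal_le {α : Type*} {m : MeasurableSpace α}
    {μ : Measure α} {f g : α → ℝ} (hfg : f ≤ᵐ[μ] g) (hf : 0 ≤ᵐ[μ] f)
    (hfin : ∫⁻ x, ENNReal.ofReal (f x) ∂μ ≠ ∞) (hg : AEMeasurable g μ)
    (hgf : ∫⁻ x, ENNReal.ofReal (g x) ∂μ ≤ ∫⁻ x, ENNReal.ofReal (f x) ∂μ) :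
    g =ᵐ[μ] f := by
  have hofReal : (fun x => ENNReal.ofReal (f x)) =ᵐ[μ] fun x => ENNReal.ofReal (g x) :=
    ae_eq_of_ae_le_of_lintegral_le (hfg.mono fun _ => ENNReal.ofReal_le_ofReal) hfin
      hg.ennreal_ofReal hgf
  filter_upwards [hofReal, hfg, hf] with x hx hxg hx0
  exact ((ENNReal.ofReal_eq_ofReal_iff hx0 (hx0.trans hxg)).1 hx).symm

namespace MeasureTheory.Martingale

variable {Ω : Type*} {m0 : MeasurableSpace Ω} {μ : Measure Ω} [IsFiniteMeasure μ]
  {ℱ : Filtration ℕ m0} {f : ℕ → Ω → ℝ} {τ : Ω → ℕ∞}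

theorem integral_stoppedValue_eq (hf : Martingale f ℱ μ) (hτ : IsStoppingTime ℱ τ) {N : ℕ}
    (hbdd : ∀ ω, τ ω ≤ N) : μ[stoppedValue f τ] = μ[f 0] := by
  have h0 : (fun _ => ((0 : ℕ) : ℕ∞)) ≤ τ := fun _ => zero_le
  apply le_antisymm
  · have := hf.neg.submartingale.expected_stoppedValue_mono (isStoppingTime_const ℱ 0) hτ h0 hbdd
    simpa [stoppedValue, integral_neg] using this
  · exact hf.submartingale.expected_stoppedValue_mono (isStoppingTime_const ℱ 0) hτ h0 hbdd

theorem lintegral_ofReal_stoppedValue_eq (hf : Martingale f ℱ μ) (hpos : ∀ n ω, 0 ≤ f n ω)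
    (hτ : IsStoppingTime ℱ τ) {N : ℕ} (hbdd : ∀ ω, τ ω ≤ N) :
    ∫⁻ ω, ENNReal.ofReal (stoppedValue f τ ω) ∂μ = ENNReal.ofReal μ[f 0] := by
  rw [← hf.integral_stoppedValue_eq hτ hbdd, ofReal_integral_eq_lintegral_ofReal
    (hf.submartingale.integrable_stoppedValue hτ hbdd) (ae_of_all _ fun ω => hpos _ ω)]

theorem lintegral_ofReal_eq (hf : Martingale f ℱ μ) (hpos : ∀ n ω, 0 ≤ f n ω) (n : ℕ) :
    ∫⁻ ω, ENNReal.ofReal (f n ω) ∂μ = ENNReal.ofReal μ[f 0] :=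
  hf.lintegral_ofReal_stoppedValue_eq hpos (isStoppingTime_const ℱ n) fun _ => le_rfl

theorem ae_tendsto_limitProcess_of_nonneg (hf : Martingale f ℱ μ) (hpos : ∀ n ω, 0 ≤ f n ω) :
    ∀ᵐ ω ∂μ, Tendsto (fun n => f n ω) atTop (𝓝 (ℱ.limitProcess f μ ω)) := by
  refine hf.submartingale.ae_tendsto_limitProcess (R := (μ[f 0]).toNNReal) fun n => ?_
  rw [eLpNorm_one_eq_lintegral_enorm]
  simp_rw [Real.enorm_eq_ofReal (hpos n _), hf.lintegral_ofReal_eq hpos n]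
  exact le_rfl

theorem lintegral_ofReal_stopVal_le (hf : Martingale f ℱ μ) (hpos : ∀ n ω, 0 ≤ f n ω)
    (hτ : IsStoppingTime ℱ τ) :
    ∫⁻ ω, ENNReal.ofReal (stopVal f τ ω) ∂μ ≤ ENNReal.ofReal μ[f 0] := by
  have hτn (n : ℕ) : IsStoppingTime ℱ fun ω => (min (τ ω) n : ℕ∞) := hτ.min_const n
  have hbdd (n : ℕ) (ω : Ω) : (min (τ ω) n : ℕ∞) ≤ n := min_le_right _ _
  calc ∫⁻ ω, ENNReal.ofReal (stopVal f τ ω) ∂μ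
      = ∫⁻ ω, liminf (fun n : ℕ =>
          ENNReal.ofReal (stoppedValue f (fun ω => (min (τ ω) n : ℕ∞)) ω)) atTop ∂μ := by
        refine lintegral_congr_ae ?_
        filter_upwards [hf.ae_tendsto_limitProcess_of_nonneg hpos] with ω hω
        exact ((ENNReal.continuous_ofReal.tendsto _).comp
          (tendsto_stoppedValue_min_stopVal hω)).liminf_eq.symm
    _ ≤ liminf (fun n : ℕ =>
          ∫⁻ ω, ENNReal.ofReal (stoppedValue f (fun ω => (min (τ ω) n : ℕ∞)) ω) ∂μ) atTop :=
        lintegral_liminf_le' fun n =>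
          ((hf.submartingale.integrable_stoppedValue (hτn n) (hbdd n)).aemeasurable).ennreal_ofReal
    _ = ENNReal.ofReal μ[f 0] := by
        simp_rw [hf.lintegral_ofReal_stoppedValue_eq hpos (hτn _) (hbdd _), liminf_const]

end MeasureTheory.Martingale

/-- Pointwise admissibility of e-values (sufficiency): a nonnegative martingale `(𝔢_t)`
with `E[𝔢_0] = 1` is an admissible e-value: it satisfies `E[𝔢_τ] ≤ 1` for all (possibly
infinite) stopping times, and any e-value dominating it a.s. coincides with it a.s. -/
theorem e_value_admissible_of_martingale {Ω : Type*} {m0 : MeasurableSpace Ω}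
    (μ : Measure Ω) [IsProbabilityMeasure μ] (ℱ : Filtration ℕ m0)
    (e : ℕ → Ω → ℝ) (hM : Martingale e ℱ μ) (hpos : ∀ t ω, 0 ≤ e t ω)
    (h1 : ∫ ω, e 0 ω ∂μ = 1) :
    (∀ τ : Ω → ℕ∞, IsENatStoppingTime ℱ τ →
      ∫⁻ ω, ENNReal.ofReal (stopVal e τ ω) ∂μ ≤ 1) ∧
    (∀ e' : ℕ → Ω → ℝ, Adapted ℱ e' →
      (∀ τ : Ω → ℕ∞, IsENatStoppingTime ℱ τ →
        ∫⁻ ω, ENNReal.ofReal (stopVal e' τ ω) ∂μ ≤ 1) →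
      (∀ t, e t ≤ᵐ[μ] e' t) → ∀ t, e' t =ᵐ[μ] e t) := by
  have hlint (t : ℕ) : ∫⁻ ω, ENNReal.ofReal (e t ω) ∂μ = 1 := by
    rw [hM.lintegral_ofReal_eq hpos t, h1, ENNReal.ofReal_one]
  refine ⟨fun τ hτ => ?_, fun e' he' hbound hle t => ?_⟩
  · simpa [h1] using hM.lintegral_ofReal_stopVal_le hpos
      (isENatStoppingTime_iff_isStoppingTime.1 hτ)
  · have hbound_t := hbound (fun _ => (t : ℕ∞))
      (isENatStoppingTime_iff_isStoppingTime.2 (isStoppingTime_const ℱ t))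
    rw [stopVal_const] at hbound_t
    refine ae_eq_of_ae_le_of_lintegral_ofReal_le (hle t) (ae_of_all _ (hpos t)) ?_
      ((he' t).mono (ℱ.le t) le_rfl).aemeasurable ?_
    · simp [hlint t]
    · rwa [hlint t]
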